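/- arXiv:1501.02602 — 3 statements merged into one kernel-verified Lean document; each statement's English description precedes it below -/
import Mathlib

section
/- An infinite virtually cyclic group V is of type I if and only if the center of V is infinite. -/
/-- A group is virtually cyclic if it contains a cyclic subgroup of finite index. -/
def VirtuallyCyclic (G : Type*) [Group G] : Prop :=
  ∃ H : Subgroup G, IsCyclic ↥H ∧ H.FiniteIndex

/-- An infinite virtually cyclic group is of type I if it admits a surjective
homomorphism onto the infinite cyclic group ℤ. -/
def IsTypeI (G : Type*) [Group G] : Prop :=
  ∃ f : G →* Multiplicative ℤ, Function.Surjective f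

/-- An infinite virtually cyclic group is of type II if it admits a surjective
homomorphism onto the infinite dihedral group D∞. -/
def IsTypeII (G : Type*) [Group G] : Prop :=
  ∃ f : G →* DihedralGroup 0, Function.Surjective f


/-!
If `f : V → ℤ` is surjective, let `⟨n⟩` be a normal cyclic subgroup of finite index (the normal
core of the given one). Then `f n ≠ 0`, as otherwise `ker f` would have finite index. Conjugation
sends `n` to some power `n ^ k`, and applying `f` forces `k = 1`; so `n` is central of infinite
order.

Conversely, an infinite center meets the infinite cyclic subgroup `H ≅ ℤ` of finite index in some
`z ≠ 1`. The transfer `V → H ≅ ℤ` sends the central element `z` to `z ^ [V : H] ≠ 1`, and a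
nontrivial homomorphism to `ℤ` is a surjection onto its image, which is again `≅ ℤ`.
-/

open Subgroup

lemma Subgroup.infinite_of_finiteIndex {G : Type*} [Group G] [Infinite G] (H : Subgroup G)
    [H.FiniteIndex] : Infinite H := by
  by_contra hH
  have : Finite H := not_infinite_iff_finite.mp hH
  have : Finite G := (finite_iff_finite_and_finiteIndex H).mpr ⟨this, inferInstance⟩
  exact not_finite G

lemma Subgroup.infinite_of_mem_of_not_isOfFinOrder {G : Type*} [Group G] {H : Subgroup G}
    {x : G} (hx : x ∈ H) (hx' : ¬IsOfFinOrder x) : Infinite H :=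
  ((infinite_zpowers.mpr hx').mono (zpowers_le.mpr hx)).to_subtype

lemma IsCyclic.nonempty_mulEquiv_multiplicative_int (G : Type*) [Group G] [IsCyclic G]
    [Infinite G] : Nonempty (G ≃* Multiplicative ℤ) := by
  obtain ⟨g, hg⟩ := IsCyclic.exists_generator (α := G)
  have hg_inf : ¬IsOfFinOrder g := by
    rw [← orderOf_eq_zero_iff, orderOf_eq_card_of_forall_mem_zpowers hg,
      Nat.card_eq_zero_of_infinite]
  refine ⟨(MulEquiv.ofBijective (zpowersHom G g) ⟨?_, fun x => ?_⟩).symm⟩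
  · exact (injective_zpow_iff_not_isOfFinOrder.mpr hg_inf).comp Multiplicative.toAdd.injective
  · obtain ⟨k, hk⟩ := hg x
    exact ⟨Multiplicative.ofAdd k, hk⟩

lemma isTypeI_of_ne_one {G : Type*} [Group G] {f : G →* Multiplicative ℤ} (hf : f ≠ 1) :
    IsTypeI G := by
  obtain ⟨g, hg⟩ := DFunLike.ne_iff.mp hf
  have : Infinite f.range := infinite_of_mem_of_not_isOfFinOrder (f.mem_range.mpr ⟨g, rfl⟩)
    (by rwa [isOfFinOrder_iff_eq_one])
  obtain ⟨e⟩ := IsCyclic.nonempty_mulEquiv_multiplicative_int f.range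
  exact ⟨e.toMonoidHom.comp f.rangeRestrict, e.surjective.comp f.rangeRestrict_surjective⟩

lemma Subgroup.Normal.mem_center_of_map_ne_one {G A : Type*} [Group G] [CommGroup A]
    [IsMulTorsionFree A] {z : G} (hN : (zpowers z).Normal) (f : G →* A) (hz : f z ≠ 1) :
    z ∈ center G := by
  refine mem_center_iff.mpr fun v => ?_
  obtain ⟨k, hk⟩ := mem_zpowers_iff.mp (hN.conj_mem z (mem_zpowers z) v)
  have hk1 : k = 1 := by
    have : f z ^ (k - 1) = 1 := by
      rw [zpow_sub_one, ← map_zpow, hk, map_mul, map_mul, map_inv, mul_inv_cancel_comm,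
        mul_inv_cancel]
    by_contra hk1
    exact hz ((isOfFinOrder_iff_eq_one _).mp
      (isOfFinOrder_iff_zpow_eq_one.mpr ⟨k - 1, sub_ne_zero.mpr hk1, this⟩))
  rw [hk1, zpow_one] at hk
  calc v * z = v * z * v⁻¹ * v := by group
    _ = z * v := by rw [← hk]

lemma VirtuallyCyclic.exists_normal_isCyclic_finiteIndex {G : Type*} [Group G]
    (hG : VirtuallyCyclic G) : ∃ N : Subgroup G, N.Normal ∧ IsCyclic N ∧ N.FiniteIndex := by
  obtain ⟨H, hH_cyc, hH_fi⟩ := hG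
  exact ⟨H.normalCore, H.normalCore_normal, isCyclic_of_le H.normalCore_le, inferInstance⟩

lemma MonoidHom.not_finiteIndex_ker_of_surjective {G G' : Type*} [Group G] [Group G']
    [Infinite G'] {f : G →* G'} (hf : Function.Surjective f) : ¬f.ker.FiniteIndex := by
  rw [not_finiteIndex_iff, index_ker, f.range_eq_top.mpr hf, card_top,
    Nat.card_eq_zero_of_infinite]

lemma MonoidHom.transfer_eq_pow_of_mem_center {G A : Type*} [Group G] [CommGroup A]
    {H : Subgroup G} [H.FiniteIndex] (ϕ : H →* A) {z : G} (hz : z ∈ center G) (hzH : z ∈ H) :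
    ϕ.transfer z = ϕ ⟨z, hzH⟩ ^ H.index := by
  rw [ϕ.transfer_eq_pow z fun k g₀ _ => by
    rw [mem_center_iff.mp (pow_mem hz k) g₀⁻¹, inv_mul_cancel_right], ← map_pow]
  rfl

lemma VirtuallyCyclic.infinite_center_of_isTypeI {G : Type*} [Group G] (hG : VirtuallyCyclic G)
    (h : IsTypeI G) : Infinite (center G) := by
  obtain ⟨f, hf⟩ := h
  obtain ⟨N, hN, hN_cyc, hN_fi⟩ := hG.exists_normal_isCyclic_finiteIndex
  obtain ⟨n, rfl⟩ := N.isCyclic_iff_exists_zpowers_eq_top.mp hN_cyc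
  have hfn : f n ≠ 1 := fun hn =>
    MonoidHom.not_finiteIndex_ker_of_surjective hf (finiteIndex_of_le (zpowers_le.mpr hn))
  exact infinite_of_mem_of_not_isOfFinOrder (hN.mem_center_of_map_ne_one f hfn)
    fun hn => hfn ((isOfFinOrder_iff_eq_one _).mp (f.isOfFinOrder hn))

lemma VirtuallyCyclic.isTypeI_of_infinite_center {G : Type*} [Group G] (hG : VirtuallyCyclic G)
    [Infinite (center G)] : IsTypeI G := by
  obtain ⟨H, hH_cyc, hH_fi⟩ := hG
  have : Infinite G := Infinite.of_injective _ (center G).subtype_injective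
  have := H.infinite_of_finiteIndex
  obtain ⟨ψ⟩ := IsCyclic.nonempty_mulEquiv_multiplicative_int H
  have := (H.subgroupOf (center G)).infinite_of_finiteIndex
  obtain ⟨⟨⟨z, hz⟩, hzH⟩, hz1⟩ := exists_ne (1 : H.subgroupOf (center G))
  replace hzH : z ∈ H := mem_subgroupOf.mp hzH
  replace hz1 : (⟨z, hzH⟩ : H) ≠ 1 := fun h => hz1 (by ext; exact congr(Subtype.val $h))
  refine isTypeI_of_ne_one (f := ψ.toMonoidHom.transfer) fun h => hz1 ?_
  have hψz : ψ.toMonoidHom ⟨z, hzH⟩ ^ H.index = 1 := by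
    rw [← MonoidHom.transfer_eq_pow_of_mem_center ψ.toMonoidHom hz hzH, h, MonoidHom.one_apply]
  rwa [pow_eq_one_iff_left hH_fi.index_ne_zero, MulEquiv.coe_toMonoidHom,
    MulEquiv.map_eq_one_iff] at hψz

theorem typeI_iff_infinite_center_general (V : Type*) [Group V]
    (hV : VirtuallyCyclic V) :
    IsTypeI V ↔ Infinite (Subgroup.center V) :=
  ⟨hV.infinite_center_of_isTypeI, fun _ => hV.isTypeI_of_infinite_center⟩

/-- An infinite virtually cyclic group is of type I iff its center is infinite. -/
theorem typeI_iff_infinite_center (V : Type*) [Group V] [Infinite V]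
    (hV : VirtuallyCyclic V) :
    IsTypeI V ↔ Infinite (Subgroup.center V) :=
  typeI_iff_infinite_center_general V hV
end

section
/- Let V be an infinite virtually cyclic group and let f : V → Q be any surjective group homomorphism onto the infinite cyclic group ℤ or onto the infinite dihedral group D∞. Then the kernel of f equals K_V, the unique maximal normal finite subgroup of V. -/
/-!
For a surjection `f : V → Q` onto an infinite group, `ker f` is finite: a cyclic subgroup `⟨g⟩`
of finite index in `V` maps onto a subgroup `⟨f g⟩` of finite index, hence infinite, in `Q`, so
`f` is injective on `⟨g⟩` and `ker f` embeds into the finite set `V ⧸ ⟨g⟩`. Thus `ker f ≤ K`.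
Conversely `f K` is a finite normal subgroup of `Q`, and neither `ℤ` nor `D∞` has a nontrivial
one, so `K ≤ ker f`.
-/

open Subgroup

namespace Subgroup

variable {G G' : Type*} [Group G] [Group G']

lemma isOfFinOrder_of_mem_of_finite {N : Subgroup G} [Finite N] {x : G} (hx : x ∈ N) :
    IsOfFinOrder x :=
  Submonoid.isOfFinOrder_coe.mpr (isOfFinOrder_of_finite (⟨x, hx⟩ : N))

lemma eq_bot_of_finite [IsMulTorsionFree G] (N : Subgroup G) [Finite N] : N = ⊥ :=
  (eq_bot_iff_forall N).mpr fun _ hx => (isOfFinOrder_of_mem_of_finite hx).eq_one'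

lemma infinite_of_finiteIndex_s7 [Infinite G] (H : Subgroup G) [H.FiniteIndex] : Infinite H := by
  refine not_finite_iff_infinite.mp fun hH => ?_
  have := (finite_iff_finite_and_finiteIndex H).mpr ⟨hH, inferInstance⟩
  exact not_finite G

lemma finite_of_disjoint_of_finiteIndex {H K : Subgroup G} [H.FiniteIndex] (h : Disjoint H K) :
    Finite K := by
  have hbot : (⊥ : Subgroup K).FiniteIndex := subgroupOf_eq_bot.mpr h ▸ inferInstance
  exact (finite_iff_finite_and_finiteIndex ⊥).mpr ⟨inferInstance, hbot⟩

lemma finiteIndex_map (H : Subgroup G) [H.FiniteIndex] {f : G →* G'}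
    (hf : Function.Surjective f) : (H.map f).FiniteIndex :=
  ⟨fun h => FiniteIndex.index_ne_zero (Nat.eq_zero_of_zero_dvd (h ▸ H.index_map_dvd hf))⟩

lemma disjoint_zpowers_ker {f : G →* G'} {g : G} (hg : ¬IsOfFinOrder (f g)) :
    Disjoint (zpowers g) f.ker := by
  rw [disjoint_def]
  rintro _ ⟨m, rfl⟩ hm
  have : m = 0 := injective_zpow_iff_not_isOfFinOrder.mpr hg (by simpa using hm)
  simp [this]

end Subgroup

theorem VirtuallyCyclic.finite_ker {V Q : Type*} [Group V] [Group Q] [Infinite Q]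
    (hV : VirtuallyCyclic V) {f : V →* Q} (hf : Function.Surjective f) : Finite f.ker := by
  obtain ⟨H, hcyc, hH⟩ := hV
  obtain ⟨g, rfl⟩ := H.isCyclic_iff_exists_zpowers_eq_top.mp hcyc
  have := finiteIndex_map (zpowers g) hf
  have hinf : Infinite (zpowers (f g)) := by
    rw [← MonoidHom.map_zpowers]
    exact infinite_of_finiteIndex_s7 _
  have hg : ¬IsOfFinOrder (f g) := infinite_zpowers.mp (Set.infinite_coe_iff.mp hinf)
  exact finite_of_disjoint_of_finiteIndex (disjoint_zpowers_ker hg)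

namespace DihedralGroup

lemma eq_zero_of_isOfFinOrder_r {i : ZMod 0} (h : IsOfFinOrder (r i)) : i = 0 := by
  obtain ⟨k, hk, hpow⟩ := isOfFinOrder_iff_pow_eq_one.mp h
  rw [r_pow, one_def, r.injEq] at hpow
  simpa [hk.ne'] using hpow

lemma eq_bot_of_normal_of_finite (N : Subgroup (DihedralGroup 0)) [N.Normal] [Finite N] :
    N = ⊥ := by
  rw [eq_bot_iff_forall]
  rintro (i | i) hi
  · rw [eq_zero_of_isOfFinOrder_r (isOfFinOrder_of_mem_of_finite hi), r_zero]
  · -- a reflection `sr i` in `N` would put the rotation `sr i * (r 1 * sr i * (r 1)⁻¹) = r (-2)` in `N`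
    have hconj : r 1 * sr i * (r 1)⁻¹ ∈ N := Normal.conj_mem ‹_› _ hi _
    have hrot := mul_mem hi hconj
    rw [inv_r, r_mul_sr, sr_mul_r, sr_mul_sr] at hrot
    have := eq_zero_of_isOfFinOrder_r (isOfFinOrder_of_mem_of_finite hrot)
    exact absurd (by rw [← this]; ring : (-2 : ZMod 0) = 0) (by decide)

end DihedralGroup

theorem ker_eq_of_surjective_of_forall_finite_normal_eq_bot {V Q : Type*} [Group V] [Group Q]
    [Infinite Q] (hV : VirtuallyCyclic V) {K : Subgroup V} (hN : K.Normal) (hF : Finite K)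
    (hmax : ∀ L : Subgroup V, L.Normal → Finite L → L ≤ K)
    (hQ : ∀ N : Subgroup Q, N.Normal → Finite N → N = ⊥)
    {f : V →* Q} (hf : Function.Surjective f) : f.ker = K :=
  le_antisymm (hmax _ f.normal_ker (hV.finite_ker hf))
    (K.map_eq_bot_iff.mp (hQ _ (hN.map f hf) ((K : Set V).toFinite.image f).to_subtype))

theorem ker_eq_maximal_finite_normal_general (V : Type*) [Group V]
    (hV : VirtuallyCyclic V) (K : Subgroup V) (hN : K.Normal) (hF : Finite K)
    (hmax : ∀ L : Subgroup V, L.Normal → Finite L → L ≤ K) :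
    (∀ f : V →* Multiplicative ℤ, Function.Surjective f → f.ker = K) ∧
    (∀ f : V →* DihedralGroup 0, Function.Surjective f → f.ker = K) :=
  ⟨fun _ hf => ker_eq_of_surjective_of_forall_finite_normal_eq_bot hV hN hF hmax
      (fun N _ _ => N.eq_bot_of_finite) hf,
    fun _ hf => ker_eq_of_surjective_of_forall_finite_normal_eq_bot hV hN hF hmax
      (fun N _ _ => DihedralGroup.eq_bot_of_normal_of_finite N) hf⟩

/-- For an infinite virtually cyclic group `V`, the kernel of any surjective homomorphism
onto ℤ or onto the infinite dihedral group D∞ equals the unique maximal normal finite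
subgroup `K` of `V`. -/
theorem ker_eq_maximal_finite_normal (V : Type*) [Group V] [Infinite V]
    (hV : VirtuallyCyclic V) (K : Subgroup V) (hN : K.Normal) (hF : Finite K)
    (hmax : ∀ L : Subgroup V, L.Normal → Finite L → L ≤ K) :
    (∀ f : V →* Multiplicative ℤ, Function.Surjective f → f.ker = K) ∧
    (∀ f : V →* DihedralGroup 0, Function.Surjective f → f.ker = K) :=
  ker_eq_maximal_finite_normal_general V hV K hN hF hmax
end

section
/- An infinite virtually cyclic group of type II does not admit any surjective group homomorphism onto the infinite cyclic group ℤ; that is, no infinite virtually cyclic group is both of type I and of type II. -/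
open DihedralGroup
open scoped commutatorElement

section

variable {G : Type*} [Group G]

theorem MonoidHom.injective_of_isCyclic_of_ne_one [IsCyclic G] {A : Type*} [Group A]
    [IsMulTorsionFree A] {f : G →* A} (hf : f ≠ 1) : Function.Injective f := by
  obtain ⟨c, hc⟩ := IsCyclic.exists_generator (α := G)
  have hfc : f c ≠ 1 := fun h ↦ hf <| MonoidHom.ext fun x ↦ by
    obtain ⟨m, rfl⟩ := Subgroup.mem_zpowers_iff.mp (hc x)
    simp [h]
  refine (injective_iff_map_eq_one f).mpr fun x hx ↦ ?_
  obtain ⟨m, rfl⟩ := Subgroup.mem_zpowers_iff.mp (hc x)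
  rw [map_zpow, IsMulTorsionFree.zpow_eq_one_iff_right hfc] at hx
  simp [hx]

theorem Subgroup.finite_of_disjoint_of_finiteIndex_s18 {H K : Subgroup G} [H.FiniteIndex]
    (h : Disjoint K H) : Finite K := by
  refine Nat.finite_of_card_ne_zero ?_
  rw [← relIndex_bot_left, ← h.symm.eq_bot, inf_relIndex_right]
  exact (isFiniteRelIndex_of_finiteIndex (K := K)).relIndex_ne_zero

theorem VirtuallyCyclic.finite_ker_of_surjective (hG : VirtuallyCyclic G) {A : Type*} [Group A]
    [Infinite A] [IsMulTorsionFree A] {f : G →* A} (hf : Function.Surjective f) : Finite f.ker := by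
  obtain ⟨H, _, _⟩ := hG
  have hfH : f.domRestrict H ≠ 1 := by
    intro h
    have : f.ker.FiniteIndex := Subgroup.finiteIndex_of_le fun x hx ↦
      f.mem_ker.mpr (DFunLike.congr_fun h ⟨x, hx⟩)
    have : Finite A := Finite.of_equiv _ (QuotientGroup.quotientKerEquivOfSurjective f hf).toEquiv
    exact not_finite A
  have hdisj : Disjoint f.ker H := by
    rw [← Subgroup.subgroupOf_eq_bot, ← MonoidHom.ker_domRestrict, MonoidHom.ker_eq_bot_iff]
    exact MonoidHom.injective_of_isCyclic_of_ne_one hfH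
  exact Subgroup.finite_of_disjoint_of_finiteIndex_s18 hdisj

theorem isOfFinOrder_commutatorElement_of_finite_ker {A : Type*} [CommGroup A] (f : G →* A)
    [Finite f.ker] (x y : G) : IsOfFinOrder ⁅x, y⁆ := by
  have hmem : ⁅x, y⁆ ∈ f.ker := by
    rw [MonoidHom.mem_ker, map_commutatorElement, commutatorElement_eq_one_iff_commute]
    exact Commute.all _ _
  exact Submonoid.isOfFinOrder_coe.mpr (isOfFinOrder_of_finite (⟨_, hmem⟩ : f.ker))

end

theorem DihedralGroup.commutatorElement_r_sr {n : ℕ} (i j : ZMod n) :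
    ⁅r i, sr j⁆ = r (2 * i) := by
  rw [commutatorElement_def, inv_r, inv_sr, r_mul_sr, sr_mul_r, sr_mul_sr]
  ring_nf

theorem DihedralGroup.not_isOfFinOrder_r {i : ZMod 0} (hi : i ≠ 0) : ¬ IsOfFinOrder (r i) := by
  rw [isOfFinOrder_iff_pow_eq_one]
  rintro ⟨k, hk, hpow⟩
  rw [r_pow, one_def, r.injEq, mul_eq_zero, Nat.cast_eq_zero] at hpow
  exact hpow.elim hi hk.ne'

theorem typeII_not_typeI_general (V : Type*) [Group V] (hV : VirtuallyCyclic V)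
    (hII : IsTypeII V) : ¬ IsTypeI V := by
  rintro ⟨f, hf⟩
  obtain ⟨g, hg⟩ := hII
  have := hV.finite_ker_of_surjective hf
  obtain ⟨v, hv⟩ := hg (r 1)
  obtain ⟨w, hw⟩ := hg (sr 0)
  have hfin := g.isOfFinOrder (isOfFinOrder_commutatorElement_of_finite_ker f v w)
  rw [map_commutatorElement, hv, hw, commutatorElement_r_sr] at hfin
  exact not_isOfFinOrder_r (by decide) hfin

/-- An infinite virtually cyclic group of type II admits no surjective homomorphism onto ℤ:
no infinite virtually cyclic group is both of type I and of type II. -/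
theorem typeII_not_typeI (V : Type*) [Group V] [Infinite V] (hV : VirtuallyCyclic V)
    (hII : IsTypeII V) : ¬ IsTypeI V :=
  typeII_not_typeI_general V hV hII
end
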